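/- Let d ≥ 1 and let P be a Borel probability measure on ℝ^d absolutely continuous with respect to ℓ_d with density p. Let φ : ℝ^d → ℝ be convex with ∂φ(ℝ^d) ⊆ B̄_d, and let T : ℝ^d → ℝ^d be a Borel map with T(x) ∈ ∂φ(x) for ℓ_d-a.e. x and T#P = U_d. Then the Monge–Ampère measure μ_φ(A) := ℓ_d(∂φ(A)) is absolutely continuous with respect to ℓ_d and, for every Borel set A ⊆ ℝ^d, ℓ_d(∂φ(A)) = a_d ∫_A p(x) |T(x)|^{d−1} dℓ_d(x). -/

import Mathlib

open MeasureTheory Set Metric Filter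
open scoped ENNReal NNReal Topology RealInnerProductSpace

noncomputable section

abbrev Euc (d : ℕ) := EuclideanSpace ℝ (Fin d)

/-- The normalizing constant `a_d = 2 π^{d/2} / Γ(d/2)`. -/
def aConst (d : ℕ) : ℝ := 2 * Real.pi ^ ((d : ℝ) / 2) / Real.Gamma ((d : ℝ) / 2)

/-- The spherical uniform distribution `U_d` on the open unit ball. -/
def sphericalUniform (d : ℕ) : Measure (Euc d) :=
  volume.withDensity fun x => ENNReal.ofReal
    ((ball (0 : Euc d) 1 \ {0}).indicator (fun x => 1 / (aConst d * ‖x‖ ^ (d - 1))) x)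

/-- Subdifferential of a convex function `f : ℝ^d → ℝ`. -/
def subdiff {d : ℕ} (f : Euc d → ℝ) (x : Euc d) : Set (Euc d) :=
  {y | ∀ z, f x + ⟪y, z - x⟫ ≤ f z}

/-- Subdifferential relative to a set `Ω`. -/
def subdiffOn {d : ℕ} (Ω : Set (Euc d)) (f : Euc d → ℝ) (u : Euc d) : Set (Euc d) :=
  {y | ∀ z ∈ Ω, f u + ⟪y, z - u⟫ ≤ f z}

/-- Support of a measure. -/
def msupport {d : ℕ} (P : Measure (Euc d)) : Set (Euc d) :=
  {x | ∀ U : Set (Euc d), IsOpen U → x ∈ U → 0 < P U}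

/-- Assumption A: `P` is a Borel probability measure absolutely continuous with density `p`,
locally bounded away from `0` and `∞` on `𝒳 ∩ R𝔹_d`. -/
def AssumptionA {d : ℕ} (P : Measure (Euc d)) (p : Euc d → ℝ) : Prop :=
  IsProbabilityMeasure P ∧
  P = volume.withDensity (fun x => ENNReal.ofReal (p x)) ∧
  ∀ R : ℝ, 0 < R → ∃ lam Lam : ℝ, 0 < lam ∧ lam ≤ Lam ∧
    ∀ x ∈ interior (msupport P) ∩ ball (0 : Euc d) R, lam ≤ p x ∧ p x ≤ Lam

/-- A center-outward potential for `P`. -/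
def IsCenterOutwardPotential {d : ℕ} (P : Measure (Euc d)) (φ : Euc d → ℝ) : Prop :=
  ConvexOn ℝ univ φ ∧
  (⋃ x, subdiff φ x) ⊆ closedBall (0 : Euc d) 1 ∧
  ∃ T : Euc d → Euc d, Measurable T ∧
    (∀ᵐ x ∂(volume : Measure (Euc d)), T x ∈ subdiff φ x) ∧
    P.map T = sphericalUniform d

/-- A quantile potential for `P`. -/
def IsQuantilePotential {d : ℕ} (P : Measure (Euc d)) (ψ : Euc d → ℝ) : Prop :=
  ConvexOn ℝ (ball (0 : Euc d) 1) ψ ∧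
  ∃ S : Euc d → Euc d, Measurable S ∧
    (∀ᵐ u ∂(volume : Measure (Euc d)), u ∈ ball (0 : Euc d) 1 →
      S u ∈ subdiffOn (ball (0 : Euc d) 1) ψ u) ∧
    (sphericalUniform d).map S = P

/-! For each `k` the localized conjugate `h_k(y) = sup_{‖x‖ ≤ k} (⟪x, y⟫ - φ x)` is
`k`-Lipschitz, hence differentiable off a Lebesgue-null set (Rademacher), and where it is
differentiable at a point `y ∈ ∂φ(x)` with `‖x‖ ≤ k` its gradient is `x`. So off a null set every
`y` lies in `∂φ(x)` for at most one `x`: this makes `∂φ(A)` measurable up to a null set and gives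
`T⁻¹(∂φ(A)) = A` up to a `P`-null set. As `U_d` has density `1 / (a_d ‖y‖^{d-1})` on the unit
ball, `ℓ_d(∂φ(A)) = ∫_{∂φ(A)} a_d ‖y‖^{d-1} dU_d = ∫_A a_d ‖T x‖^{d-1} dP`, and `dP = p dℓ_d`. -/

section WithDensity

variable {α : Type*} [MeasurableSpace α] {μ : Measure α} {g : α → ℝ≥0∞}

theorem lintegral_withDensity_le_lintegral_mul_of_measurable (hg : Measurable g)
    (f : α → ℝ≥0∞) : ∫⁻ a, g a ∂μ.withDensity f ≤ ∫⁻ a, (f * g) a ∂μ := by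
  refine Measurable.ennreal_induction (fun c s hs => ?_) (fun g h _ hg _ ihg ihh => ?_)
    (fun g hg hmono ih => ?_) hg
  · calc ∫⁻ a, s.indicator (fun _ => c) a ∂μ.withDensity f = c * ∫⁻ a in s, f a ∂μ := by
          rw [lintegral_indicator_const hs, withDensity_apply _ hs]
      _ ≤ ∫⁻ a in s, c * f a ∂μ := lintegral_const_mul_le _ _
      _ = ∫⁻ a, (f * s.indicator fun _ => c) a ∂μ := by
          rw [← lintegral_indicator hs]
          congr 1 with a
          by_cases ha : a ∈ s <;> simp [ha, mul_comm]
  · calc ∫⁻ a, (g + h) a ∂μ.withDensity f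
          = ∫⁻ a, g a ∂μ.withDensity f + ∫⁻ a, h a ∂μ.withDensity f := lintegral_add_left hg _
      _ ≤ ∫⁻ a, (f * g) a ∂μ + ∫⁻ a, (f * h) a ∂μ := add_le_add ihg ihh
      _ ≤ ∫⁻ a, (f * (g + h)) a ∂μ := by
          rw [mul_add]; exact le_lintegral_add _ _
  · rw [lintegral_iSup hg hmono]
    exact iSup_le fun n => (ih n).trans <| lintegral_mono fun a =>
      mul_le_mul_right (le_iSup (fun n => g n a) n) _

theorem lintegral_withDensity_eq_lintegral_mul_of_measurable (hg : Measurable g)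
    (hg_fin : ∀ a, g a ≠ ∞) (f : α → ℝ≥0∞) :
    ∫⁻ a, g a ∂μ.withDensity f = ∫⁻ a, (f * g) a ∂μ := by
  refine le_antisymm (lintegral_withDensity_le_lintegral_mul_of_measurable hg f) ?_
  rw [← iSup_lintegral_measurable_le_eq_lintegral]
  refine iSup₂_le fun i hi => iSup_le fun hif => ?_
  -- `i = (i / g) * g`, and the measurable density `i / g` is below `f`
  have hdiv_le : (fun a => i a / g a) ≤ f := fun a => ENNReal.div_le_of_le_mul (hif a)
  have hdiv_mul : ∀ a, i a / g a * g a = i a := fun a => by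
    rcases eq_or_ne (g a) 0 with h0 | h0
    · have : i a = 0 := by simpa [h0] using hif a
      simp [h0, this]
    · exact ENNReal.div_mul_cancel h0 (hg_fin a)
  calc ∫⁻ a, i a ∂μ = ∫⁻ a, g a ∂μ.withDensity fun a => i a / g a := by
        rw [lintegral_withDensity_eq_lintegral_mul _ (by exact hi.div hg) hg]
        exact lintegral_congr fun a => (hdiv_mul a).symm
    _ ≤ ∫⁻ a, g a ∂μ.withDensity f :=
        lintegral_mono' (withDensity_mono (ae_of_all _ hdiv_le)) le_rfl

end WithDensity

section LocalConj

variable {d : ℕ} {φ : Euc d → ℝ}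

def localConj (φ : Euc d → ℝ) (k : ℕ) (y : Euc d) : ℝ :=
  sSup ((fun x => ⟪x, y⟫ - φ x) '' closedBall 0 k)

theorem le_localConj (hφ : Continuous φ) {k : ℕ} {x : Euc d} (hx : ‖x‖ ≤ k) (y : Euc d) :
    ⟪x, y⟫ - φ x ≤ localConj φ k y :=
  le_csSup ((isCompact_closedBall _ _).bddAbove_image (by fun_prop))
    (mem_image_of_mem _ (mem_closedBall_zero_iff.2 hx))

theorem localConj_le {k : ℕ} {y : Euc d} {c : ℝ} (h : ∀ x : Euc d, ‖x‖ ≤ k → ⟪x, y⟫ - φ x ≤ c) :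
    localConj φ k y ≤ c :=
  csSup_le ((nonempty_closedBall.2 k.cast_nonneg).image _) <| forall_mem_image.2 fun x hx =>
    h x (mem_closedBall_zero_iff.1 hx)

theorem lipschitzWith_localConj (hφ : Continuous φ) (k : ℕ) :
    LipschitzWith (k : ℝ≥0) (localConj φ k) := by
  refine LipschitzWith.of_le_add_mul _ fun y₁ y₂ => localConj_le fun x hx => ?_
  calc ⟪x, y₁⟫ - φ x = (⟪x, y₂⟫ - φ x) + ⟪x, y₁ - y₂⟫ := by rw [inner_sub_right]; ring
    _ ≤ localConj φ k y₂ + k * dist y₁ y₂ := by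
        gcongr
        · exact le_localConj hφ hx y₂
        · exact (real_inner_le_norm _ _).trans (by rw [dist_eq_norm]; gcongr)

/-- The affine function `⟪x, ·⟫ - φ x` lies below `localConj φ k` and touches it at every
`y ∈ ∂φ(x)`, so a gradient of `localConj φ k` at `y` can only be `x`. -/
theorem gradient_localConj_eq (hφ : Continuous φ) {k : ℕ} {x y : Euc d}
    (hxy : y ∈ subdiff φ x) (hxk : ‖x‖ ≤ k) (hdiff : DifferentiableAt ℝ (localConj φ k) y) :
    gradient (localConj φ k) y = x := by
  have hmin : IsMinOn (fun z => localConj φ k z - ⟪x, z⟫) univ y := fun z _ => by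
    have htouch : localConj φ k y ≤ ⟪x, y⟫ - φ x := localConj_le fun x' _ => by
      have := hxy x'
      rw [inner_sub_right, real_inner_comm x' y, real_inner_comm x y] at this
      linarith
    have := le_localConj hφ hxk z
    show localConj φ k y - ⟪x, y⟫ ≤ localConj φ k z - ⟪x, z⟫
    linarith
  have hzero := (hmin.isLocalMin univ_mem).hasFDerivAt_eq_zero
    (hdiff.hasFDerivAt.sub (innerSL ℝ x).hasFDerivAt)
  rw [sub_eq_zero] at hzero
  rw [gradient, hzero]
  exact (InnerProductSpace.toDual ℝ (Euc d)).symm_apply_eq.2 rfl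

end LocalConj

section RegularSet

variable {d : ℕ} {φ : Euc d → ℝ}

def conjRegularSet (φ : Euc d → ℝ) : Set (Euc d) :=
  {y | ∀ k : ℕ, DifferentiableAt ℝ (localConj φ k) y}

theorem measurableSet_conjRegularSet : MeasurableSet (conjRegularSet φ) := by
  simp only [conjRegularSet, ofPred_forall]
  exact MeasurableSet.iInter fun k => measurableSet_of_differentiableAt ℝ _

theorem volume_compl_conjRegularSet (hφ : Continuous φ) : volume (conjRegularSet φ)ᶜ = 0 := by
  simp only [conjRegularSet, ofPred_forall, compl_iInter]
  exact measure_iUnion_null fun k => (lipschitzWith_localConj hφ k).ae_differentiableAt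

theorem eq_of_mem_subdiff_of_mem_conjRegularSet (hφ : Continuous φ) {x x' y : Euc d}
    (hy : y ∈ conjRegularSet φ) (hx : y ∈ subdiff φ x) (hx' : y ∈ subdiff φ x') : x = x' := by
  obtain ⟨k, hk⟩ := exists_nat_ge (max ‖x‖ ‖x'‖)
  rw [← gradient_localConj_eq hφ hx (le_of_max_le_left hk) (hy k),
    gradient_localConj_eq hφ hx' (le_of_max_le_right hk) (hy k)]

theorem mem_subdiffImage_inter_conjRegularSet_iff (hφ : Continuous φ) {A : Set (Euc d)}
    {x y : Euc d} (hx : y ∈ subdiff φ x) (hy : y ∈ conjRegularSet φ) :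
    y ∈ (⋃ x ∈ A, subdiff φ x) ∩ conjRegularSet φ ↔ x ∈ A := by
  refine ⟨fun ⟨hyA, _⟩ => ?_, fun hxA => ⟨mem_biUnion hxA hx, hy⟩⟩
  obtain ⟨x', hx'A, hx'⟩ := mem_iUnion₂.1 hyA
  rwa [eq_of_mem_subdiff_of_mem_conjRegularSet hφ hy hx hx']

theorem isClosed_subdiff_graph (hφ : Continuous φ) :
    IsClosed {q : Euc d × Euc d | q.2 ∈ subdiff φ q.1} := by
  have : {q : Euc d × Euc d | q.2 ∈ subdiff φ q.1} =
      ⋂ z, {q : Euc d × Euc d | φ q.1 + ⟪q.2, z - q.1⟫ ≤ φ z} := by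
    ext; simp [subdiff]
  rw [this]
  exact isClosed_iInter fun z => isClosed_le (by fun_prop) continuous_const

theorem measurableSet_subdiffImage_inter_conjRegularSet (hφ : Continuous φ) {A : Set (Euc d)}
    (hA : MeasurableSet A) : MeasurableSet ((⋃ x ∈ A, subdiff φ x) ∩ conjRegularSet φ) := by
  have hG : ∀ k : ℕ, Measurable (gradient (localConj φ k)) := fun k =>
    (InnerProductSpace.toDual ℝ (Euc d)).symm.continuous.measurable.comp (measurable_fderiv ℝ _)
  have hunion : (⋃ x ∈ A, subdiff φ x) ∩ conjRegularSet φ = ⋃ k : ℕ,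
      (fun y => (gradient (localConj φ k) y, y)) ⁻¹'
        ((A ×ˢ univ) ∩ {q | q.2 ∈ subdiff φ q.1}) ∩ conjRegularSet φ := by
    ext y
    simp only [mem_inter_iff, mem_iUnion, mem_preimage, mem_prod, mem_univ, and_true,
      mem_ofPred_eq, exists_prop]
    constructor
    · rintro ⟨⟨x, hxA, hx⟩, hy⟩
      obtain ⟨k, hk⟩ := exists_nat_ge ‖x‖
      exact ⟨k, by rw [gradient_localConj_eq hφ hx hk (hy k)]; exact ⟨⟨hxA, hx⟩, hy⟩⟩
    · rintro ⟨k, ⟨hxA, hx⟩, hy⟩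
      exact ⟨⟨_, hxA, hx⟩, hy⟩
  rw [hunion]
  exact MeasurableSet.iUnion fun k =>
    (((hG k).prodMk measurable_id) ((hA.prod .univ).inter
      (isClosed_subdiff_graph hφ).measurableSet)).inter measurableSet_conjRegularSet

end RegularSet

section SphericalUniform

variable {d : ℕ}

theorem aConst_pos (hd : 0 < d) : 0 < aConst d := by
  have := Real.Gamma_pos_of_pos (by positivity : 0 < (d : ℝ) / 2)
  unfold aConst
  positivity

/-- The reciprocal `1 / u_d` of the density of `U_d` on the punctured unit ball. -/
def sphericalWeight (d : ℕ) (y : Euc d) : ℝ≥0∞ :=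
  ENNReal.ofReal (aConst d * ‖y‖ ^ (d - 1))

theorem measurable_sphericalWeight : Measurable (sphericalWeight d) := by
  unfold sphericalWeight; fun_prop

theorem sphericalUniform_withDensity_sphericalWeight (hd : 0 < d) :
    (sphericalUniform d).withDensity (sphericalWeight d) = volume.restrict (closedBall 0 1) := by
  set B : Set (Euc d) := ball 0 1 \ {0}
  have hB : MeasurableSet B := measurableSet_ball.diff (measurableSet_singleton 0)
  have hdensity : Measurable fun y : Euc d =>
      ENNReal.ofReal (B.indicator (fun y => 1 / (aConst d * ‖y‖ ^ (d - 1))) y) :=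
    ((by fun_prop : Measurable fun y : Euc d => 1 / (aConst d * ‖y‖ ^ (d - 1))).indicator
      hB).ennreal_ofReal
  have hprod : (fun y : Euc d => ENNReal.ofReal
      (B.indicator (fun y => 1 / (aConst d * ‖y‖ ^ (d - 1))) y)) * sphericalWeight d =
      B.indicator 1 := by
    funext y
    by_cases hy : y ∈ B
    · have hy0 : 0 < ‖y‖ := norm_pos_iff.2 hy.2
      have : 0 < aConst d * ‖y‖ ^ (d - 1) := by have := aConst_pos hd; positivity
      rw [Pi.mul_apply, indicator_of_mem hy, indicator_of_mem hy, sphericalWeight,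
        ← ENNReal.ofReal_mul (by positivity), one_div, inv_mul_cancel₀ this.ne',
        ENNReal.ofReal_one, Pi.one_apply]
    · simp [indicator_of_notMem hy]
  have hB_ae : B =ᵐ[volume] closedBall (0 : Euc d) 1 := by
    have : Nonempty (Fin d) := ⟨⟨0, hd⟩⟩
    refine (sdiff_null_ae_eq_self (measure_singleton 0)).trans (ae_eq_set.2 ⟨?_, ?_⟩)
    · rw [sdiff_eq_empty.2 ball_subset_closedBall, measure_empty]
    · rw [closedBall_sdiff_ball, Measure.addHaar_sphere_of_ne_zero _ _ one_ne_zero]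
  rw [sphericalUniform, ← withDensity_mul _ hdensity measurable_sphericalWeight, hprod,
    withDensity_indicator_one hB, Measure.restrict_congr_set hB_ae]

end SphericalUniform

theorem volume_subdiffImage_eq_setLIntegral {d : ℕ} (hd : 0 < d) {φ : Euc d → ℝ}
    (hφ : Continuous φ) (hball : (⋃ x, subdiff φ x) ⊆ closedBall 0 1) {P : Measure (Euc d)}
    {T : Euc d → Euc d} (hT : Measurable T) (hTsub : ∀ᵐ x ∂P, T x ∈ subdiff φ x)
    (hTpush : P.map T = sphericalUniform d) {A : Set (Euc d)} (hA : MeasurableSet A) :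
    volume (⋃ x ∈ A, subdiff φ x) = ∫⁻ x in A, sphericalWeight d (T x) ∂P := by
  set E := (⋃ x ∈ A, subdiff φ x) ∩ conjRegularSet φ
  have hE : MeasurableSet E := measurableSet_subdiffImage_inter_conjRegularSet hφ hA
  have hE_ball : E ⊆ closedBall 0 1 :=
    inter_subset_left.trans <| iUnion₂_subset fun x _ => (subset_iUnion _ x).trans hball
  have hTreg : ∀ᵐ x ∂P, T x ∈ conjRegularSet φ := by
    refine ae_of_ae_map hT.aemeasurable ?_
    rw [hTpush]
    exact (withDensity_absolutelyContinuous _ _).ae_le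
      (mem_ae_iff.2 (volume_compl_conjRegularSet hφ))
  have hpre : T ⁻¹' E =ᵐ[P] A := eventuallyEq_set.2 <| (hTsub.and hTreg).mono fun x hx =>
    mem_subdiffImage_inter_conjRegularSet_iff hφ hx.1 hx.2
  calc volume (⋃ x ∈ A, subdiff φ x) = volume E :=
        (measure_inter_conull (volume_compl_conjRegularSet hφ)).symm
    _ = volume.restrict (closedBall 0 1) E := (Measure.restrict_eq_self _ hE_ball).symm
    _ = ∫⁻ y in E, sphericalWeight d y ∂(P.map T) := by
        rw [← sphericalUniform_withDensity_sphericalWeight hd, ← hTpush, withDensity_apply _ hE]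
    _ = ∫⁻ x in T ⁻¹' E, sphericalWeight d (T x) ∂P :=
        setLIntegral_map hE measurable_sphericalWeight hT
    _ = ∫⁻ x in A, sphericalWeight d (T x) ∂P := setLIntegral_congr hpre

theorem stmt_11_general {d : ℕ} (hd : 1 ≤ d) (P : Measure (Euc d))
    (p : Euc d → ℝ)
    (hP : P = volume.withDensity (fun x => ENNReal.ofReal (p x)))
    (φ : Euc d → ℝ) (hconv : ConvexOn ℝ univ φ)
    (hball : (⋃ x, subdiff φ x) ⊆ closedBall (0 : Euc d) 1)
    (T : Euc d → Euc d) (hTmeas : Measurable T)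
    (hTsub : ∀ᵐ x ∂(volume : Measure (Euc d)), T x ∈ subdiff φ x)
    (hTpush : P.map T = sphericalUniform d) :
    (∀ A : Set (Euc d), MeasurableSet A → volume A = 0 →
      volume (⋃ x ∈ A, subdiff φ x) = 0) ∧
    ∀ A : Set (Euc d), MeasurableSet A →
      volume (⋃ x ∈ A, subdiff φ x) =
        ∫⁻ x in A, ENNReal.ofReal (aConst d * (p x * ‖T x‖ ^ (d - 1))) := by
  have hφ : Continuous φ := continuousOn_univ.1 (hconv.continuousOn isOpen_univ)
  have hP_ac : P ≪ volume := hP ▸ withDensity_absolutelyContinuous _ _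
  have hformula : ∀ A : Set (Euc d), MeasurableSet A → volume (⋃ x ∈ A, subdiff φ x) =
      ∫⁻ x in A, ENNReal.ofReal (aConst d * (p x * ‖T x‖ ^ (d - 1))) := fun A hA => by
    rw [volume_subdiffImage_eq_setLIntegral hd hφ hball hTmeas (hP_ac.ae_le hTsub) hTpush hA,
      hP, restrict_withDensity hA, lintegral_withDensity_eq_lintegral_mul_of_measurable
        (g := fun x => sphericalWeight d (T x)) (measurable_sphericalWeight.comp hTmeas)
        fun _ => ENNReal.ofReal_ne_top]
    refine lintegral_congr fun x => ?_
    have := aConst_pos hd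
    rw [Pi.mul_apply, sphericalWeight, ← ENNReal.ofReal_mul' (by positivity), mul_left_comm]
  exact ⟨fun A hA hA0 => (hformula A hA).trans (setLIntegral_measure_zero _ _ hA0), hformula⟩

/-- the Monge–Ampère measure `A ↦ ℓ_d(∂φ(A))` of a center-outward potential
is absolutely continuous with density `a_d · p(x) |T(x)|^{d-1}`. -/
theorem stmt_11 {d : ℕ} (hd : 1 ≤ d) (P : Measure (Euc d)) [IsProbabilityMeasure P]
    (p : Euc d → ℝ)
    (hP : P = volume.withDensity (fun x => ENNReal.ofReal (p x)))
    (φ : Euc d → ℝ) (hconv : ConvexOn ℝ univ φ)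
    (hball : (⋃ x, subdiff φ x) ⊆ closedBall (0 : Euc d) 1)
    (T : Euc d → Euc d) (hTmeas : Measurable T)
    (hTsub : ∀ᵐ x ∂(volume : Measure (Euc d)), T x ∈ subdiff φ x)
    (hTpush : P.map T = sphericalUniform d) :
    (∀ A : Set (Euc d), MeasurableSet A → volume A = 0 →
      volume (⋃ x ∈ A, subdiff φ x) = 0) ∧
    ∀ A : Set (Euc d), MeasurableSet A →
      volume (⋃ x ∈ A, subdiff φ x) =
        ∫⁻ x in A, ENNReal.ofReal (aConst d * (p x * ‖T x‖ ^ (d - 1))) :=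
  stmt_11_general hd P p hP φ hconv hball T hTmeas hTsub hTpush
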